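/- Suppose m₂ : ℕ → ℝ is completely multiplicative with values in {-1, 0, 1} and satisfies ∑_{n=1}^∞ m₂(n)·n·f(2πn²/x) > 0 for all x > 0 (f(y) = (1/y)∫_y^∞ e^{-t}/t dt). Let p be prime and let m₁ be completely multiplicative, agreeing with m₂ at all primes except p, with m₁(p) = 0 and m₂(p) = -1. Then for all x > 0: ∑_{n=1}^∞ m₁(n)·n·f(2πn²/x) - ∑_{n=1}^∞ m₂(n)·n·f(2πn²/x) = p·∑_{n=1}^∞ m₂(n)·n·f(2π n² p²/x) > 0. -/

import Mathlib

noncomputable def f (y : ℝ) : ℝ := (1 / y) * ∫ t in Set.Ioi y, Real.exp (-t) / t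

open Real MeasureTheory Set

lemma integrable_aux {y : ℝ} (hy : 0 < y) :
    IntegrableOn (fun t => Real.exp (-t) / t) (Set.Ioi y) := by
  have h1 : IntegrableOn (fun t => Real.exp (-(1:ℝ) * t)) (Set.Ioi y) :=
    exp_neg_integrableOn_Ioi y one_pos
  refine ((h1.div_const y).mono' ?_ ?_)
  · exact ((Real.measurable_exp.comp measurable_neg).div measurable_id).aestronglyMeasurable
  · filter_upwards [self_mem_ae_restrict measurableSet_Ioi] with t ht
    have ht' : y < t := ht
    have h0 : 0 < t := hy.trans ht'
    rw [Real.norm_eq_abs, abs_of_nonneg (by positivity)]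
    simp only [neg_one_mul]
    exact div_le_div_of_nonneg_left (Real.exp_pos _).le hy ht'.le

lemma f_nonneg {y : ℝ} (hy : 0 < y) : 0 ≤ f y := by
  unfold f
  have : 0 ≤ ∫ t in Set.Ioi y, Real.exp (-t) / t := by
    apply setIntegral_nonneg measurableSet_Ioi
    intro t ht
    have : 0 < t := hy.trans ht
    positivity
  positivity

lemma f_le {y : ℝ} (hy : 0 < y) : f y ≤ Real.exp (-y) / y ^ 2 := by
  unfold f
  have hint : (∫ t in Set.Ioi y, Real.exp (-t) / t) ≤ ∫ t in Set.Ioi y, Real.exp (-t) / y := by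
    apply setIntegral_mono_on (integrable_aux hy) ?_ measurableSet_Ioi
    · intro t ht
      exact div_le_div_of_nonneg_left (Real.exp_pos _).le hy (le_of_lt ht)
    · have h1 : IntegrableOn (fun t => Real.exp (-(1:ℝ) * t)) (Set.Ioi y) :=
        exp_neg_integrableOn_Ioi y one_pos
      exact (by simpa [neg_one_mul] using h1.div_const y :
        Integrable (fun t => Real.exp (-t) / y) (volume.restrict (Set.Ioi y)))
  have heval : (∫ t in Set.Ioi y, Real.exp (-t) / y) = Real.exp (-y) / y := by
    rw [integral_div, integral_exp_neg_Ioi]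
  calc (1 / y) * ∫ t in Set.Ioi y, Real.exp (-t) / t
      ≤ (1 / y) * (Real.exp (-y) / y) := by
        rw [← heval]; exact mul_le_mul_of_nonneg_left hint (by positivity)
    _ = Real.exp (-y) / y ^ 2 := by field_simp

lemma summable_aux (m : ℕ → ℝ) (hm : ∀ n, |m n| ≤ 1) {x : ℝ} (hx : 0 < x) :
    Summable (fun n : ℕ => m n * (n : ℝ) * f (2 * π * (n : ℝ) ^ 2 / x)) := by
  set a : ℝ := 2 * π / x with ha
  have hapos : 0 < a := by
    have := Real.pi_pos; positivity
  have hgeo : Summable (fun n : ℕ => (1 / a ^ 2) * Real.exp (-a) ^ n) :=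
    (summable_geometric_of_lt_one (Real.exp_nonneg _)
      (Real.exp_lt_one_iff.mpr (by linarith))).mul_left _
  apply Summable.of_norm_bounded hgeo
  intro n
  rcases Nat.eq_zero_or_pos n with hn | hn
  · subst hn; simp; positivity
  · have hn1 : (1 : ℝ) ≤ (n : ℝ) := by exact_mod_cast hn
    have harg : 2 * π * (n : ℝ) ^ 2 / x = a * (n : ℝ) ^ 2 := by rw [ha]; ring
    have hypos : 0 < a * (n : ℝ) ^ 2 := by positivity
    rw [harg, Real.norm_eq_abs, abs_mul, abs_mul]
    have h1 : |f (a * (n : ℝ) ^ 2)| = f (a * (n : ℝ) ^ 2) := abs_of_nonneg (f_nonneg hypos)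
    rw [h1, Nat.abs_cast]
    have h2 : f (a * (n : ℝ) ^ 2) ≤ Real.exp (-(a * (n : ℝ) ^ 2)) / (a * (n : ℝ) ^ 2) ^ 2 :=
      f_le hypos
    have h3 : |m n| * (n : ℝ) * f (a * (n : ℝ) ^ 2)
        ≤ (n : ℝ) * (Real.exp (-(a * (n : ℝ) ^ 2)) / (a * (n : ℝ) ^ 2) ^ 2) := by
      have hmn := hm n
      have hfnn := f_nonneg hypos
      have hb := mul_le_mul_of_nonneg_left h2 (Nat.cast_nonneg n : (0:ℝ) ≤ n)
      have hc := mul_le_mul_of_nonneg_right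
        (mul_le_mul_of_nonneg_right hmn (Nat.cast_nonneg n : (0:ℝ) ≤ n)) hfnn
      linarith
    refine h3.trans ?_
    have hexp : Real.exp (-(a * (n : ℝ) ^ 2)) ≤ Real.exp (-a) ^ n := by
      rw [← Real.exp_nat_mul]
      apply Real.exp_le_exp.mpr
      have : (n : ℝ) ≤ (n : ℝ) ^ 2 := by nlinarith
      nlinarith
    have hcoef : (n : ℝ) / (a * (n : ℝ) ^ 2) ^ 2 ≤ 1 / a ^ 2 := by
      rw [div_le_div_iff₀ (by positivity) (by positivity)]
      have : (1:ℝ) ≤ (n:ℝ)^3 := by nlinarith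
      nlinarith [sq_nonneg a]
    calc (n : ℝ) * (Real.exp (-(a * (n : ℝ) ^ 2)) / (a * (n : ℝ) ^ 2) ^ 2)
        = ((n : ℝ) / (a * (n : ℝ) ^ 2) ^ 2) * Real.exp (-(a * (n : ℝ) ^ 2)) := by ring
      _ ≤ (1 / a ^ 2) * Real.exp (-a) ^ n := by
          apply mul_le_mul hcoef hexp (Real.exp_nonneg _) (by positivity)

open Real in
theorem raise_prime_from_neg_one (m₁ m₂ : ℕ → ℝ) (p : ℕ) (hp : p.Prime)
    (h₁one : m₁ 1 = 1) (h₁mul : ∀ a b : ℕ, m₁ (a * b) = m₁ a * m₁ b)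
    (h₂one : m₂ 1 = 1) (h₂mul : ∀ a b : ℕ, m₂ (a * b) = m₂ a * m₂ b)
    (h₁val : ∀ n, m₁ n = -1 ∨ m₁ n = 0 ∨ m₁ n = 1)
    (h₂val : ∀ n, m₂ n = -1 ∨ m₂ n = 0 ∨ m₂ n = 1)
    (hagree : ∀ q : ℕ, q.Prime → q ≠ p → m₁ q = m₂ q)
    (h₂p : m₂ p = -1) (h₁p : m₁ p = 0)
    (hpos : ∀ x : ℝ, 0 < x → 0 < ∑' n : ℕ, m₂ n * (n : ℝ) * f (2 * π * (n : ℝ) ^ 2 / x)) :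
    ∀ x : ℝ, 0 < x →
      (∑' n : ℕ, m₁ n * (n : ℝ) * f (2 * π * (n : ℝ) ^ 2 / x)) -
        (∑' n : ℕ, m₂ n * (n : ℝ) * f (2 * π * (n : ℝ) ^ 2 / x)) =
        (p : ℝ) * ∑' n : ℕ, m₂ n * (n : ℝ) * f (2 * π * (n : ℝ) ^ 2 * (p : ℝ) ^ 2 / x) ∧
      0 < (p : ℝ) * ∑' n : ℕ, m₂ n * (n : ℝ) * f (2 * π * (n : ℝ) ^ 2 * (p : ℝ) ^ 2 / x) := by
  -- basic facts
  have h₁abs : ∀ n, |m₁ n| ≤ 1 := by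
    intro n; rcases h₁val n with h | h | h <;> rw [h] <;> norm_num
  have h₂abs : ∀ n, |m₂ n| ≤ 1 := by
    intro n; rcases h₂val n with h | h | h <;> rw [h] <;> norm_num
  have hppos : 0 < (p : ℝ) := by exact_mod_cast hp.pos
  -- m₁ agrees with m₂ off multiples of p
  have hagree' : ∀ n : ℕ, ¬ p ∣ n → m₁ n = m₂ n := by
    intro n
    induction n using Nat.recOnMul with
    | zero => intro h; exact absurd (dvd_zero p) h
    | one => intro _; rw [h₁one, h₂one]
    | prime q hq =>
        intro h
        exact hagree q hq (fun hqp => h (hqp ▸ dvd_refl p))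
    | mul a b iha ihb =>
        intro h
        rw [h₁mul, h₂mul, iha (fun hd => h (hd.mul_right b)),
          ihb (fun hd => h (hd.mul_left a))]
  intro x hx
  set F₁ : ℕ → ℝ := fun n => m₁ n * (n : ℝ) * f (2 * π * (n : ℝ) ^ 2 / x) with hF₁def
  set F : ℕ → ℝ := fun n => m₂ n * (n : ℝ) * f (2 * π * (n : ℝ) ^ 2 / x) with hFdef
  set G : ℕ → ℝ := fun n => m₂ n * (n : ℝ) * f (2 * π * (n : ℝ) ^ 2 * (p : ℝ) ^ 2 / x)
    with hGdef
  have hxp : 0 < x / (p : ℝ) ^ 2 := by positivity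
  have hargG : ∀ n : ℕ, 2 * π * (n : ℝ) ^ 2 * (p : ℝ) ^ 2 / x
      = 2 * π * (n : ℝ) ^ 2 / (x / (p : ℝ) ^ 2) := by
    intro n; field_simp
  have hSF₁ : Summable F₁ := summable_aux m₁ h₁abs hx
  have hSF : Summable F := summable_aux m₂ h₂abs hx
  have hGalt : G = fun n : ℕ => m₂ n * (n : ℝ) * f (2 * π * (n : ℝ) ^ 2 / (x / (p : ℝ) ^ 2)) := by
    funext n
    show m₂ n * (n : ℝ) * f (2 * π * (n : ℝ) ^ 2 * (p : ℝ) ^ 2 / x) = _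
    rw [hargG n]
  -- positivity part
  have hGpos : 0 < ∑' n, G n := by
    rw [hGalt]; exact hpos _ hxp
  refine ⟨?_, by positivity⟩
  -- key pointwise identity : F₁ n - F n = D n
  set D : ℕ → ℝ := fun n => if p ∣ n then -F n else 0 with hDdef
  have hpoint : ∀ n, F₁ n - F n = D n := by
    intro n
    rw [hDdef]
    by_cases hd : p ∣ n
    · simp only [hd, if_true]
      rcases Nat.eq_zero_or_pos n with rfl | hn
      · simp [hF₁def, hFdef]
      · obtain ⟨k, rfl⟩ := hd
        have : m₁ (p * k) = 0 := by rw [h₁mul, h₁p, zero_mul]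
        simp only [hF₁def, hFdef, this, zero_mul]
        ring
    · simp only [hd, if_false]
      rw [hF₁def, hFdef]
      simp only [hagree' n hd]
      ring
  -- D composed with multiplication by p
  have hcomp : ∀ n : ℕ, D (p * n) = (p : ℝ) * G n := by
    intro n
    have hd : p ∣ p * n := dvd_mul_right p n
    rw [hDdef]
    simp only [hd, if_true]
    have h2 : m₂ (p * n) = -m₂ n := by rw [h₂mul, h₂p]; ring
    have h3 : ((p * n : ℕ) : ℝ) = (p : ℝ) * (n : ℝ) := by push_cast; ring
    have h4 : 2 * π * ((p * n : ℕ) : ℝ) ^ 2 / x = 2 * π * (n : ℝ) ^ 2 * (p : ℝ) ^ 2 / x := by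
      push_cast; ring
    show -(m₂ (p * n) * ((p * n : ℕ) : ℝ) * f (2 * π * ((p * n : ℕ) : ℝ) ^ 2 / x))
      = (p : ℝ) * (m₂ n * (n : ℝ) * f (2 * π * (n : ℝ) ^ 2 * (p : ℝ) ^ 2 / x))
    rw [h2, h4, h3]
    ring
  have hinj : Function.Injective (fun n : ℕ => p * n) :=
    fun a b h => by
      have := mul_left_cancel₀ (Nat.cast_ne_zero.mp (ne_of_gt hppos) : p ≠ 0) h
      exact this
  have hsupp : Function.support D ⊆ Set.range (fun n : ℕ => p * n) := by
    intro n hn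
    rw [Function.mem_support, hDdef] at hn
    by_cases hd : p ∣ n
    · obtain ⟨k, rfl⟩ := hd; exact ⟨k, rfl⟩
    · simp [hd] at hn
  have hDsum : ∑' n, D (p * n) = ∑' n, D n := hinj.tsum_eq hsupp
  calc (∑' n, F₁ n) - ∑' n, F n
      = ∑' n, (F₁ n - F n) := (Summable.tsum_sub hSF₁ hSF).symm
    _ = ∑' n, D n := by exact tsum_congr hpoint
    _ = ∑' n, D (p * n) := hDsum.symm
    _ = ∑' n, (p : ℝ) * G n := tsum_congr hcomp
    _ = (p : ℝ) * ∑' n, G n := tsum_mul_left
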